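/- arXiv:1208.3589 — 2 statements merged into one kernel-verified Lean document; each statement's English description precedes it below -/
import Mathlib

section
/- Let (m, S, α, ω) be a solution of the EYM field equations on an interval [r₀, r₁) ⊆ (0,∞) with μ(r) > 0 and S(r) > 0 for all r ∈ [r₀, r₁). If α(r₀) ≥ 0 and α'(r₀) > 0, then α'(r) > 0 for all r ∈ [r₀, r₁); in particular the electric gauge field function α is strictly increasing on [r₀, r₁). -/
/-!
The quantity `r² α'/S` has derivative `2αω²/(μS)`, which is nonnegative as long as `α ≥ 0`.
Starting from `α(r₀) ≥ 0` and `α'(r₀) > 0`, suppose `α' > 0` on `[r₀, t)`. Then `α` increases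
on `[r₀, t]`, so `α ≥ 0` there, so `r² α'/S` increases on `[r₀, t]` and `α'(t) > 0`.
A continuity induction along `[r₀, r₁)` turns this into `α' > 0` everywhere.
-/

noncomputable section

open Set Filter

/-- The metric function `μ(r) = 1 - 2 m(r)/r + r²/ℓ²`. -/
def metricMu (ℓ : ℝ) (m : ℝ → ℝ) (r : ℝ) : ℝ :=
  1 - 2 * m r / r + r ^ 2 / ℓ ^ 2

/-- `(m, S, a, w)` is a solution of the su(2) Einstein–Yang–Mills field equations
(with electric gauge field function `a = α` and magnetic gauge field function `w = ω`)
on the interval `I ⊆ (0, ∞)`. -/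
structure IsEYMSolution (ℓ : ℝ) (I : Set ℝ) (m S a w : ℝ → ℝ) : Prop where
  subset_Ioi : I ⊆ Set.Ioi (0 : ℝ)
  ordConnected : I.OrdConnected
  m_C1 : ContDiffOn ℝ 1 m I
  S_C1 : ContDiffOn ℝ 1 S I
  a_C2 : ContDiffOn ℝ 2 a I
  w_C2 : ContDiffOn ℝ 2 w I
  S_ne_zero : ∀ r ∈ I, S r ≠ 0
  mu_ne_zero : ∀ r ∈ I, metricMu ℓ m r ≠ 0
  eq_m : ∀ r ∈ I, deriv m r =
      r ^ 2 * (deriv a r) ^ 2 / (2 * S r ^ 2)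
        + a r ^ 2 * w r ^ 2 / (metricMu ℓ m r * S r ^ 2)
        + metricMu ℓ m r * (deriv w r) ^ 2
        + (w r ^ 2 - 1) ^ 2 / (2 * r ^ 2)
  eq_S : ∀ r ∈ I, deriv S r =
      S r * (2 * a r ^ 2 * w r ^ 2 / (r * metricMu ℓ m r ^ 2 * S r ^ 2)
        + 2 * (deriv w r) ^ 2 / r)
  eq_a : ∀ r ∈ I, deriv (deriv a) r =
      -2 * deriv a r / r + deriv a r * deriv S r / S r
        + 2 * a r * w r ^ 2 / (r ^ 2 * metricMu ℓ m r)
  eq_w : ∀ r ∈ I, deriv (deriv w) r =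
      -(deriv w r) * deriv S r / S r
        - deriv w r * deriv (metricMu ℓ m) r / metricMu ℓ m r
        - a r ^ 2 * w r / (metricMu ℓ m r ^ 2 * S r ^ 2)
        + w r * (w r ^ 2 - 1) / (r ^ 2 * metricMu ℓ m r)

theorem forall_Ico_pos_of_continuousOn {f : ℝ → ℝ} {r₀ r₁ : ℝ}
    (hf : ContinuousOn f (Ico r₀ r₁))
    (hstep : ∀ t ∈ Ico r₀ r₁, (∀ r ∈ Ico r₀ t, 0 < f r) → 0 < f t) :
    ∀ r ∈ Ico r₀ r₁, 0 < f r := by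
  by_contra! hneg
  set B : Set ℝ := {r ∈ Ico r₀ r₁ | f r ≤ 0}
  obtain ⟨b, hbI, hb⟩ := hneg
  have hBne : B.Nonempty := ⟨b, hbI, hb⟩
  have hBbdd : BddBelow B := ⟨r₀, fun x hx => hx.1.1⟩
  have htI : sInf B ∈ Ico r₀ r₁ :=
    ⟨le_csInf hBne fun x hx => hx.1.1, (csInf_le hBbdd ⟨hbI, hb⟩).trans_lt hbI.2⟩
  have hft : f (sInf B) ≤ 0 := by
    have := ((hf _ htI).mono fun x hx => hx.1).mem_closure (csInf_mem_closure hBne hBbdd)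
      (t := Iic 0) fun x hx => hx.2
    rwa [closure_Iic] at this
  have hbefore : ∀ r ∈ Ico r₀ (sInf B), 0 < f r := fun r hr => by
    by_contra! h
    exact hr.2.not_ge (csInf_le hBbdd ⟨⟨hr.1, hr.2.trans htI.2⟩, h⟩)
  exact (hstep _ htI hbefore).not_ge hft

theorem ContDiffOn.continuousOn_deriv_of_differentiableAt {f : ℝ → ℝ} {s : Set ℝ}
    (hf : ContDiffOn ℝ 1 f s) (hs : UniqueDiffOn ℝ s)
    (hd : ∀ x ∈ s, DifferentiableAt ℝ f x) : ContinuousOn (deriv f) s :=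
  (hf.continuousOn_derivWithin hs le_rfl).congr fun x hx =>
    ((hd x hx).derivWithin (hs x hx)).symm

theorem ContDiffOn.differentiableAt_of_mem_interior {f : ℝ → ℝ} {s : Set ℝ} {n : WithTop ℕ∞}
    (hf : ContDiffOn ℝ n f s) (hn : n ≠ 0) {x : ℝ} (hx : x ∈ interior s) :
    DifferentiableAt ℝ f x :=
  (hf.differentiableOn hn x (interior_subset hx)).differentiableAt
    (mem_interior_iff_mem_nhds.mp hx)

def electricFlux (S a : ℝ → ℝ) (r : ℝ) : ℝ :=
  r ^ 2 * deriv a r / S r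

theorem deriv_pos_of_electricFlux_pos {S a : ℝ → ℝ} {r : ℝ} (hS : 0 < S r)
    (hflux : 0 < electricFlux S a r) : 0 < deriv a r := by
  by_contra! h
  exact hflux.not_ge (div_nonpos_of_nonpos_of_nonneg
    (mul_nonpos_of_nonneg_of_nonpos (sq_nonneg r) h) hS.le)

namespace IsEYMSolution

variable {ℓ : ℝ} {I : Set ℝ} {m S a w : ℝ → ℝ}

theorem hasDerivAt_electricFlux (hsol : IsEYMSolution ℓ I m S a w) {x : ℝ}
    (hx : x ∈ interior I) :
    HasDerivAt (electricFlux S a) (2 * a x * w x ^ 2 / (metricMu ℓ m x * S x)) x := by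
  have hxI : x ∈ I := interior_subset hx
  have hx0 : x ≠ 0 := (hsol.subset_Ioi hxI).ne'
  have hSx := hsol.S_ne_zero x hxI
  have hμx := hsol.mu_ne_zero x hxI
  have hda : HasDerivAt (deriv a) (deriv (deriv a) x) x :=
    (((hsol.a_C2.mono interior_subset).deriv_of_isOpen isOpen_interior (by norm_num)
      ).differentiableOn one_ne_zero x hx |>.differentiableAt
        (isOpen_interior.mem_nhds hx)).hasDerivAt
  have hS : HasDerivAt S (deriv S x) x :=
    (hsol.S_C1.differentiableAt_of_mem_interior one_ne_zero hx).hasDerivAt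
  refine (((hasDerivAt_pow 2 x).fun_mul hda).div hS hSx).congr_deriv ?_
  rw [hsol.eq_a x hxI]
  field_simp
  ring

theorem monotoneOn_electricFlux (hsol : IsEYMSolution ℓ I m S a w) {c d : ℝ}
    (hcd : Icc c d ⊆ I) (hda : ContinuousOn (deriv a) (Icc c d))
    (ha : ∀ x ∈ Ioo c d, 0 ≤ a x) (hμ : ∀ x ∈ Ioo c d, 0 < metricMu ℓ m x)
    (hS : ∀ x ∈ Ioo c d, 0 < S x) :
    MonotoneOn (electricFlux S a) (Icc c d) := by
  have hint : ∀ x ∈ Ioo c d, x ∈ interior I := fun x hx =>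
    interior_maximal (Ioo_subset_Icc_self.trans hcd) isOpen_Ioo hx
  refine monotoneOn_of_deriv_nonneg (convex_Icc c d) ?_ ?_ ?_
  · exact (((continuous_pow 2).continuousOn).mul hda).div (hsol.S_C1.continuousOn.mono hcd)
      fun x hx => hsol.S_ne_zero x (hcd hx)
  · rw [interior_Icc]
    exact fun x hx =>
      (hsol.hasDerivAt_electricFlux (hint x hx)).differentiableAt.differentiableWithinAt
  · rw [interior_Icc]
    intro x hx
    rw [(hsol.hasDerivAt_electricFlux (hint x hx)).deriv]
    have := ha x hx
    have := hμ x hx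
    have := hS x hx
    positivity

theorem deriv_pos_of_forall_Ico_deriv_pos (hsol : IsEYMSolution ℓ I m S a w) {c t : ℝ}
    (hct : c ≤ t) (hsub : Icc c t ⊆ I) (hda : ContinuousOn (deriv a) (Icc c t))
    (hμ : ∀ x ∈ Ioo c t, 0 < metricMu ℓ m x) (hS : ∀ x ∈ Icc c t, 0 < S x)
    (ha : 0 ≤ a c) (ha' : 0 < deriv a c) (hbefore : ∀ x ∈ Ico c t, 0 < deriv a x) :
    0 < deriv a t := by
  have hc : c ∈ Icc c t := left_mem_Icc.2 hct
  have ha_mono : StrictMonoOn a (Icc c t) :=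
    strictMonoOn_of_deriv_pos (convex_Icc c t) (hsol.a_C2.continuousOn.mono hsub)
      fun x hx => hbefore x (Ioo_subset_Ico_self (interior_Icc (a := c) ▸ hx))
  have ha_nonneg : ∀ x ∈ Ioo c t, 0 ≤ a x := fun x hx =>
    ha.trans (ha_mono.monotoneOn hc (Ioo_subset_Icc_self hx) hx.1.le)
  have hflux_mono := hsol.monotoneOn_electricFlux hsub hda ha_nonneg hμ
    fun x hx => hS x (Ioo_subset_Icc_self hx)
  have hflux_c : 0 < electricFlux S a c := by
    have : 0 < c := hsol.subset_Ioi (hsub hc)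
    have := hS c hc
    unfold electricFlux
    positivity
  exact deriv_pos_of_electricFlux_pos (hS t (right_mem_Icc.2 hct)) <|
    hflux_c.trans_le <| hflux_mono hc (right_mem_Icc.2 hct) hct

end IsEYMSolution

theorem eym_electric_increasing_general (ℓ r₀ r₁ : ℝ) (m S a w : ℝ → ℝ)
    (hsol : IsEYMSolution ℓ (Set.Ico r₀ r₁) m S a w)
    (hμ : ∀ r ∈ Set.Ico r₀ r₁, 0 < metricMu ℓ m r)
    (hS : ∀ r ∈ Set.Ico r₀ r₁, 0 < S r)
    (ha : 0 ≤ a r₀) (ha' : 0 < deriv a r₀) :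
    (∀ r ∈ Set.Ico r₀ r₁, 0 < deriv a r) ∧ StrictMonoOn a (Set.Ico r₀ r₁) := by
  have hda : ContinuousOn (deriv a) (Ico r₀ r₁) := by
    refine (hsol.a_C2.of_le (by norm_num)).continuousOn_deriv_of_differentiableAt
      (uniqueDiffOn_Ico r₀ r₁) fun x hx => ?_
    -- `ContDiffOn` on `Ico` only controls `a` from the right at `r₀`; `deriv a r₀ ≠ 0` does the rest.
    rcases hx.1.eq_or_lt with rfl | hlt
    · exact differentiableAt_of_deriv_ne_zero ha'.ne'
    · exact hsol.a_C2.differentiableAt_of_mem_interior (by norm_num) (by simp [hlt, hx.2])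
  have hpos : ∀ r ∈ Ico r₀ r₁, 0 < deriv a r := by
    refine forall_Ico_pos_of_continuousOn hda fun t ht hbefore => ?_
    have hsub : Icc r₀ t ⊆ Ico r₀ r₁ := Icc_subset_Ico_right ht.2
    exact hsol.deriv_pos_of_forall_Ico_deriv_pos ht.1 hsub (hda.mono hsub)
      (fun x hx => hμ x (hsub (Ioo_subset_Icc_self hx))) (fun x hx => hS x (hsub hx))
      ha ha' hbefore
  refine ⟨hpos, strictMonoOn_of_deriv_pos (convex_Ico r₀ r₁) hsol.a_C2.continuousOn ?_⟩
  exact fun x hx => hpos x (interior_subset hx)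

/-- **Monotonicity of the electric gauge field function.**
If `(m, S, α, ω)` solves the EYM field equations on `[r₀, r₁) ⊆ (0, ∞)` with `μ > 0`
and `S > 0` there, and `α(r₀) ≥ 0`, `α'(r₀) > 0`, then `α'(r) > 0` throughout
`[r₀, r₁)`; in particular `α` is strictly increasing on `[r₀, r₁)`. -/
theorem eym_electric_increasing (ℓ r₀ r₁ : ℝ) (hℓ : 0 < ℓ) (hr₀ : 0 < r₀)
    (hr₀₁ : r₀ < r₁) (m S a w : ℝ → ℝ)
    (hsol : IsEYMSolution ℓ (Set.Ico r₀ r₁) m S a w)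
    (hμ : ∀ r ∈ Set.Ico r₀ r₁, 0 < metricMu ℓ m r)
    (hS : ∀ r ∈ Set.Ico r₀ r₁, 0 < S r)
    (ha : 0 ≤ a r₀) (ha' : 0 < deriv a r₀) :
    (∀ r ∈ Set.Ico r₀ r₁, 0 < deriv a r) ∧ StrictMonoOn a (Set.Ico r₀ r₁) :=
  eym_electric_increasing_general ℓ r₀ r₁ m S a w hsol hμ hS ha ha'
end
end

section
/- Fix ℓ > 0, r_h > 0 and δ > 0. Suppose (m, S, α, ω) is a solution of the EYM field equations on (r_h, r_h + δ) with μ(r) > 0 and S(r) > 0 for all r ∈ (r_h, r_h + δ), and suppose m, S extend to C¹ functions on [r_h, r_h + δ) and α, ω extend to C² functions on [r_h, r_h + δ), with μ(r_h) = 0, S(r_h) > 0 and ω(r_h) ≠ 0. Then α(r_h) = 0; i.e. the electric gauge field function must vanish at a regular event horizon. -/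
/-!
The field equation for `S` gives `S' ≥ 2 α² ω² / (r μ² S)` wherever `S > 0`. As `r ↓ r_h` we
have `μ → 0` while `α² ω² → α(r_h)² ω(r_h)²`, so if `α(r_h) ≠ 0` the right-hand side, and hence
`S'`, tends to `+∞`. This is impossible: `S` is `C¹` up to `r_h`, so `S'` has a finite limit there.
-/

noncomputable section

open Set Filter

open Topology

theorem ContDiffOn.tendsto_deriv_nhdsGT {E : Type*} [NormedAddCommGroup E] [NormedSpace ℝ E]
    {f : ℝ → E} {a b : ℝ} (hab : a < b) (hf : ContDiffOn ℝ 1 f (Ico a b)) :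
    Tendsto (deriv f) (𝓝[>] a) (𝓝 (derivWithin f (Ico a b) a)) := by
  have hcont := hf.continuousOn_derivWithin (uniqueDiffOn_Ico a b) le_rfl a (left_mem_Ico.2 hab)
  rw [continuousWithinAt_Ico_iff_Ici hab] at hcont
  refine (hcont.mono Ioi_subset_Ici_self).tendsto.congr' ?_
  filter_upwards [Ioo_mem_nhdsGT hab] with r hr
  exact derivWithin_of_mem_nhds (mem_of_superset (isOpen_Ioo.mem_nhds hr) Ioo_subset_Ico_self)

theorem ContinuousOn.continuousWithinAt_Ioi_of_Ico {α : Type*} [TopologicalSpace α]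
    {f : ℝ → α} {a b : ℝ} (hab : a < b) (hf : ContinuousOn f (Ico a b)) :
    ContinuousWithinAt f (Ioi a) a :=
  ((continuousWithinAt_Ico_iff_Ici hab).1 (hf a (left_mem_Ico.2 hab))).mono Ioi_subset_Ici_self

theorem continuousWithinAt_metricMu {ℓ r : ℝ} {m : ℝ → ℝ} {s : Set ℝ}
    (hm : ContinuousWithinAt m s r) (hr : r ≠ 0) : ContinuousWithinAt (metricMu ℓ m) s r :=
  (continuousWithinAt_const.sub ((continuousWithinAt_const.mul hm).div continuousWithinAt_id hr)).add
    ((continuousWithinAt_id.pow 2).div_const _)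

namespace IsEYMSolution

variable {ℓ : ℝ} {I : Set ℝ} {m S a w : ℝ → ℝ}

theorem div_le_deriv_S (hsol : IsEYMSolution ℓ I m S a w) {r : ℝ} (hr : r ∈ I) (hS : 0 < S r) :
    2 * a r ^ 2 * w r ^ 2 / (r * metricMu ℓ m r ^ 2 * S r) ≤ deriv S r := by
  have hr0 : 0 < r := hsol.subset_Ioi hr
  have hsplit : S r * (2 * a r ^ 2 * w r ^ 2 / (r * metricMu ℓ m r ^ 2 * S r ^ 2)) =
      2 * a r ^ 2 * w r ^ 2 / (r * metricMu ℓ m r ^ 2 * S r) := by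
    field_simp
  have hmagnetic : 0 ≤ S r * (2 * deriv w r ^ 2 / r) := by positivity
  rw [hsol.eq_S r hr, mul_add, hsplit]
  linarith

theorem tendsto_deriv_S_atTop (hsol : IsEYMSolution ℓ I m S a w) {r₀ : ℝ} (hI : I ∈ 𝓝[>] r₀)
    (hSpos : ∀ r ∈ I, 0 < S r) (ha : ContinuousWithinAt a (Ioi r₀) r₀)
    (hw : ContinuousWithinAt w (Ioi r₀) r₀) (hS : ContinuousWithinAt S (Ioi r₀) r₀)
    (hμ : Tendsto (metricMu ℓ m) (𝓝[>] r₀) (𝓝 0)) (ha₀ : a r₀ ≠ 0) (hw₀ : w r₀ ≠ 0) :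
    Tendsto (deriv S) (𝓝[>] r₀) atTop := by
  have hnum₀ : 0 < 2 * a r₀ ^ 2 * w r₀ ^ 2 := by positivity
  have hnum : Tendsto (fun r ↦ 2 * a r ^ 2 * w r ^ 2) (𝓝[>] r₀) (𝓝 (2 * a r₀ ^ 2 * w r₀ ^ 2)) :=
    ((ha.tendsto.pow 2).const_mul 2).mul (hw.tendsto.pow 2)
  have hden : Tendsto (fun r ↦ r * metricMu ℓ m r ^ 2 * S r) (𝓝[>] r₀) (𝓝[>] 0) := by
    refine tendsto_nhdsWithin_iff.2 ⟨?_, ?_⟩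
    · simpa using ((tendsto_id.mono_left nhdsWithin_le_nhds).mul (hμ.pow 2)).mul hS.tendsto
    · filter_upwards [hI] with r hr
      have hr0 : 0 < r := hsol.subset_Ioi hr
      have hμ0 : metricMu ℓ m r ≠ 0 := hsol.mu_ne_zero r hr
      have hS0 : 0 < S r := hSpos r hr
      exact mem_Ioi.2 (by positivity)
  refine tendsto_atTop_mono' _ ?_ (hnum.pos_mul_atTop hnum₀ hden.inv_tendsto_nhdsGT_zero)
  filter_upwards [hI] with r hr
  simpa only [Pi.inv_apply, div_eq_mul_inv] using hsol.div_le_deriv_S hr (hSpos r hr)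

end IsEYMSolution

theorem eym_electric_vanishes_at_horizon_general (ℓ rh δ : ℝ) (hrh : 0 < rh)
    (hδ : 0 < δ) (m S a w : ℝ → ℝ)
    (hsol : IsEYMSolution ℓ (Set.Ioo rh (rh + δ)) m S a w)
    (hSpos : ∀ r ∈ Set.Ioo rh (rh + δ), 0 < S r)
    (hm : ContDiffOn ℝ 1 m (Set.Ico rh (rh + δ)))
    (hS : ContDiffOn ℝ 1 S (Set.Ico rh (rh + δ)))
    (ha : ContDiffOn ℝ 2 a (Set.Ico rh (rh + δ)))
    (hw : ContDiffOn ℝ 2 w (Set.Ico rh (rh + δ)))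
    (hμh : metricMu ℓ m rh = 0) (hwh : w rh ≠ 0) :
    a rh = 0 := by
  by_contra ha₀
  have hlt : rh < rh + δ := lt_add_of_pos_right rh hδ
  have hμ : Tendsto (metricMu ℓ m) (𝓝[>] rh) (𝓝 0) :=
    hμh ▸ (continuousWithinAt_metricMu (hm.continuousOn.continuousWithinAt_Ioi_of_Ico hlt)
      hrh.ne').tendsto
  have hblowup := hsol.tendsto_deriv_S_atTop (Ioo_mem_nhdsGT hlt) hSpos
    (ha.continuousOn.continuousWithinAt_Ioi_of_Ico hlt)
    (hw.continuousOn.continuousWithinAt_Ioi_of_Ico hlt)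
    (hS.continuousOn.continuousWithinAt_Ioi_of_Ico hlt) hμ ha₀ hwh
  exact not_tendsto_nhds_of_tendsto_atTop hblowup _ (hS.tendsto_deriv_nhdsGT hlt)

/-- **The electric gauge field function vanishes at a regular event horizon.**
If `(m, S, α, ω)` solves the EYM field equations on `(r_h, r_h + δ)` with `μ > 0` and
`S > 0` there, and `m, S` extend `C¹`-ly and `α, ω` extend `C²`-ly to `[r_h, r_h + δ)`
with `μ(r_h) = 0`, `S(r_h) > 0` and `ω(r_h) ≠ 0`, then `α(r_h) = 0`. -/
theorem eym_electric_vanishes_at_horizon (ℓ rh δ : ℝ) (hℓ : 0 < ℓ) (hrh : 0 < rh)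
    (hδ : 0 < δ) (m S a w : ℝ → ℝ)
    (hsol : IsEYMSolution ℓ (Set.Ioo rh (rh + δ)) m S a w)
    (hμpos : ∀ r ∈ Set.Ioo rh (rh + δ), 0 < metricMu ℓ m r)
    (hSpos : ∀ r ∈ Set.Ioo rh (rh + δ), 0 < S r)
    (hm : ContDiffOn ℝ 1 m (Set.Ico rh (rh + δ)))
    (hS : ContDiffOn ℝ 1 S (Set.Ico rh (rh + δ)))
    (ha : ContDiffOn ℝ 2 a (Set.Ico rh (rh + δ)))
    (hw : ContDiffOn ℝ 2 w (Set.Ico rh (rh + δ)))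
    (hμh : metricMu ℓ m rh = 0) (hSh : 0 < S rh) (hwh : w rh ≠ 0) :
    a rh = 0 :=
  eym_electric_vanishes_at_horizon_general ℓ rh δ hrh hδ m S a w hsol hSpos hm hS ha hw hμh hwh
end
end
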